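/- arXiv:2004.10128 — 4 statements merged into one kernel-verified Lean document; each statement's English description precedes it below -/
import Mathlib

section
/- cos(π/7) − cos(2π/7) + cos(2π/21) − cos(5π/21) = 1/2. -/
open Real Finset

/- Multiplying the alternating sum `∑ (-1)^k cos((k+1)x)` by `2 cos(x/2)` makes it telescope,
since `2 cos(x/2) cos(kx) = cos((2k+1)x/2) + cos((2k-1)x/2)`. For `x = π/(2n+1)` the last term is
`cos(π/2) = 0`, so `cos(π/7) - cos(2π/7) + cos(3π/7) = 1/2`. The remaining two terms combine to
`cos(2π/21) - cos(5π/21) = 2 sin(π/6) sin(π/14) = cos(3π/7)`. -/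

theorem two_mul_cos_half_mul_sum_range_neg_one_pow_mul_cos (x : ℝ) (n : ℕ) :
    2 * cos (x / 2) * ∑ k ∈ range n, (-1) ^ k * cos ((k + 1) * x) =
      cos (x / 2) - (-1) ^ n * cos ((2 * n + 1) * x / 2) := by
  induction n with
  | zero => simp
  | succ n ih =>
    have product_to_sum : 2 * cos (x / 2) * cos ((n + 1) * x) =
        cos ((2 * n + 3) * x / 2) + cos ((2 * n + 1) * x / 2) := by
      rw [cos_add_cos, show ((2 * n + 3) * x / 2 + (2 * n + 1) * x / 2) / 2 = (n + 1) * x by ring,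
        show ((2 * n + 3) * x / 2 - (2 * n + 1) * x / 2) / 2 = x / 2 by ring]
      ring
    rw [sum_range_succ, mul_add, ih, pow_succ, mul_left_comm, product_to_sum]
    push_cast
    ring_nf

theorem sum_range_neg_one_pow_mul_cos_pi_div {n : ℕ} (hn : 0 < n) :
    ∑ k ∈ range n, (-1) ^ k * cos ((k + 1) * (π / (2 * n + 1))) = 1 / 2 := by
  set x := π / (2 * n + 1)
  have hx : 0 < x := by positivity
  have hx_lt : x < π := div_lt_self pi_pos (by linarith [(Nat.one_le_cast.mpr hn : (1 : ℝ) ≤ n)])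
  have hcos : 0 < cos (x / 2) := cos_pos_of_mem_Ioo ⟨by linarith, by linarith⟩
  have hend : (2 * n + 1) * x / 2 = π / 2 := by
    simp only [x]; field_simp
  have h := two_mul_cos_half_mul_sum_range_neg_one_pow_mul_cos x n
  rw [hend, cos_pi_div_two, mul_zero, sub_zero] at h
  rw [eq_div_iff two_ne_zero]
  apply mul_left_cancel₀ hcos.ne'
  linarith

theorem cos_pi_div_six_sub_sub_cos_pi_div_six_add (y : ℝ) :
    cos (π / 6 - y) - cos (π / 6 + y) = sin y := by
  rw [cos_sub, cos_add, sin_pi_div_six]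
  ring

theorem stmt8 : Real.cos (π / 7) - Real.cos (2 * π / 7) + Real.cos (2 * π / 21) - Real.cos (5 * π / 21) = 1 / 2 := by
  have alternating : cos (π / 7) - cos (2 * π / 7) + cos (3 * π / 7) = 1 / 2 := by
    have h := sum_range_neg_one_pow_mul_cos_pi_div (n := 3) (by norm_num)
    norm_num [sum_range_succ] at h
    rw [← h]
    ring_nf
  have pair : cos (2 * π / 21) - cos (5 * π / 21) = cos (3 * π / 7) := by
    have h := cos_pi_div_six_sub_sub_cos_pi_div_six_add (π / 14)
    rw [← cos_pi_div_two_sub] at h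
    convert h using 3 <;> ring
  linarith
end

section
/- −cos(2π/7) + cos(3π/7) + cos(4π/21) + cos(10π/21) = 1/2. -/
/-!
Since `4π/21` and `10π/21` are `π/3 ∓ π/7`, the sum `cos (4π/21) + cos (10π/21)` equals
`2 cos (π/3) cos (π/7) = cos (π/7)`, and the claim becomes the classical identity
`cos (π/7) - cos (2π/7) + cos (3π/7) = 1/2`. Multiplying it by `2 sin (π/7)` turns the left side,
by product-to-sum, into the telescoping sum `sin (π/7) - sin (3π/7) + sin (4π/7)`, which is
`sin (π/7)` because `sin (4π/7) = sin (π - 3π/7)`.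
-/

open Real

lemma two_mul_sin_mul_cos_sub_cos_two_mul_add_cos_three_mul (x : ℝ) :
    2 * sin x * (cos x - cos (2 * x) + cos (3 * x)) = sin x - sin (3 * x) + sin (4 * x) := by
  have h2 : 2 * sin x * cos (2 * x) = sin (3 * x) - sin x := by
    rw [two_mul_sin_mul_cos, show x - 2 * x = -x by ring, sin_neg]; ring_nf
  have h3 : 2 * sin x * cos (3 * x) = sin (4 * x) - sin (2 * x) := by
    rw [two_mul_sin_mul_cos, show x - 3 * x = -(2 * x) by ring, sin_neg]; ring_nf
  rw [mul_add, mul_sub, h2, h3, ← sin_two_mul]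
  ring

lemma cos_pi_div_seven_sub_cos_two_pi_div_seven_add_cos_three_pi_div_seven :
    cos (π / 7) - cos (2 * π / 7) + cos (3 * π / 7) = 1 / 2 := by
  have hsin : sin (π / 7) ≠ 0 := (sin_pos_of_pos_of_lt_pi (by positivity) (by linarith [pi_pos])).ne'
  have hsym : sin (4 * (π / 7)) = sin (3 * (π / 7)) := by
    rw [← sin_pi_sub]; ring_nf
  have key : 2 * sin (π / 7) * (cos (π / 7) - cos (2 * (π / 7)) + cos (3 * (π / 7)))
      = 2 * sin (π / 7) * (1 / 2) := by
    rw [two_mul_sin_mul_cos_sub_cos_two_mul_add_cos_three_mul, hsym, sub_add_cancel]; ring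
  rw [mul_div_assoc, mul_div_assoc]
  exact mul_left_cancel₀ (mul_ne_zero two_ne_zero hsin) key

theorem stmt9 : -Real.cos (2 * π / 7) + Real.cos (3 * π / 7) + Real.cos (4 * π / 21) + Real.cos (10 * π / 21) = 1 / 2 := by
  have hpair : cos (4 * π / 21) + cos (10 * π / 21) = cos (π / 7) := by
    rw [cos_add_cos, show (4 * π / 21 + 10 * π / 21) / 2 = π / 3 by ring,
      show (4 * π / 21 - 10 * π / 21) / 2 = -(π / 7) by ring, cos_pi_div_three, cos_neg]
    ring
  linarith [cos_pi_div_seven_sub_cos_two_pi_div_seven_add_cos_three_pi_div_seven]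
end

section
/- There are no rational numbers A, B, both nonzero, and rational angles a = aπ' and b = bπ' (with a', b' rational) satisfying 0 < a < b < π/2 such that A·cos(a) + B·cos(b) = 0. -/
/-!
If `A cos a + B cos b = 0`, then `cos a = r cos b` with `r = p / q > 1` in lowest terms. Writing
`a = π k / n`, `b = π l / n` and `ζ = exp (π i / n)`, the numbers `2 cos a = ζ ^ k + ζ ^ (-k)` and
`2 cos b` are algebraic integers with `q (2 cos a) = p (2 cos b)`, so by Bézout `θ = 2 cos a / p`
is a nonzero algebraic integer. Every conjugate of `θ` is `(ξ + ξ⁻¹) / p` for a root of unity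
`ξ ≠ ±1`, hence has absolute value `< 2 / p ≤ 1`; but some conjugate of a nonzero algebraic
integer has absolute value at least `1`.
-/

open Real

theorem Complex.norm_add_inv_lt_two {w : ℂ} (hw : ‖w‖ = 1) (hw2 : w ^ 2 ≠ 1) :
    ‖w + w⁻¹‖ < 2 := by
  have hconj : w⁻¹ = (starRingEnd ℂ) w := Complex.inv_eq_conj hw
  have hre : w + w⁻¹ = (2 * w.re : ℝ) := by
    rw [hconj, Complex.add_conj]
  have hsq : w.re ^ 2 + w.im ^ 2 = 1 := by
    have := Complex.sq_norm w
    rw [hw, Complex.normSq_apply] at this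
    nlinarith
  have hre_lt : |w.re| < 1 := by
    refine lt_of_le_of_ne (abs_le.2 ⟨by nlinarith, by nlinarith⟩) fun h1 => hw2 ?_
    have him : w.im = 0 := by nlinarith [sq_abs w.re]
    rcases abs_eq (zero_le_one' ℝ) |>.1 h1 with h | h <;>
      simp [Complex.ext_iff, pow_two, h, him]
  rw [hre, Complex.norm_real, Real.norm_eq_abs, abs_mul, abs_two]
  linarith

theorem isIntegral_of_pow_eq_one {R : Type*} [CommRing R] {w : R} {N : ℕ} (hN : N ≠ 0)
    (hw : w ^ N = 1) : IsIntegral ℤ w :=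
  ⟨Polynomial.X ^ N - 1, Polynomial.monic_X_pow_sub_C 1 hN, by simp [hw]⟩

theorem isIntegral_add_inv_of_pow_eq_one {K : Type*} [Field K] {w : K} {N : ℕ} (hN : N ≠ 0)
    (hw : w ^ N = 1) : IsIntegral ℤ (w + w⁻¹) :=
  (isIntegral_of_pow_eq_one hN hw).add (isIntegral_of_pow_eq_one hN (by rw [inv_pow, hw, inv_one]))

theorem exists_isIntegral_mul_eq_of_isCoprime {R : Type*} [CommRing R] {p q : ℤ}
    (hpq : IsCoprime q p) {α β : R} (hα : IsIntegral ℤ α) (hβ : IsIntegral ℤ β)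
    (h : (q : R) * α = p * β) : ∃ θ : R, IsIntegral ℤ θ ∧ (p : R) * θ = α := by
  obtain ⟨x, y, hxy⟩ := hpq
  refine ⟨x * β + y * α, ?_, ?_⟩
  · exact ((isIntegral_algebraMap (x := x)).mul hβ).add ((isIntegral_algebraMap (x := y)).mul hα)
  · have hxy' : (x : R) * q + y * p = 1 := by exact_mod_cast congrArg (Int.cast (R := R)) hxy
    linear_combination (-(x : R)) * h + α * hxy'

theorem NumberField.abs_le_one_of_mul_add_inv_eq {K : Type*} [Field K] [NumberField K]
    {z w : K} {N : ℕ} (hN : N ≠ 0) (hz : z ^ N = 1) (hw : w ^ N = 1) (hz2 : z ^ 2 ≠ 1)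
    (hz0 : z + z⁻¹ ≠ 0) {p q : ℤ} (hpq : IsCoprime q p)
    (h : (q : K) * (z + z⁻¹) = p * (w + w⁻¹)) : |p| ≤ 1 := by
  obtain ⟨θ, hθ, hpθ⟩ := exists_isIntegral_mul_eq_of_isCoprime hpq
    (isIntegral_add_inv_of_pow_eq_one hN hz) (isIntegral_add_inv_of_pow_eq_one hN hw) h
  have hθ0 : θ ≠ 0 := by rintro rfl; exact hz0 (by simpa using hpθ.symm)
  obtain ⟨σ, hσ⟩ := NumberField.exists_conjugate_one_le_norm (α := ⟨θ, hθ⟩)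
    fun h0 => hθ0 (congrArg RingOfIntegers.val h0)
  change 1 ≤ ‖σ θ‖ at hσ
  have hσz : ‖σ (z + z⁻¹)‖ < 2 := by
    rw [map_add, map_inv₀]
    refine Complex.norm_add_inv_lt_two
      (Complex.norm_eq_one_of_pow_eq_one (by rw [← map_pow, hz, map_one]) hN) ?_
    rw [← map_pow, ← map_one σ]
    exact σ.injective.ne hz2
  rw [← hpθ, map_mul, map_intCast, norm_mul, Complex.norm_intCast] at hσz
  have hp : (|p| : ℝ) < 2 := by nlinarith [abs_nonneg (p : ℝ)]
  exact Int.lt_add_one_iff.mp (by exact_mod_cast hp)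

theorem Complex.abs_le_one_of_mul_add_inv_eq {z w : ℂ} {N : ℕ} (hN : N ≠ 0) (hz : z ^ N = 1)
    (hw : w ^ N = 1) (hz2 : z ^ 2 ≠ 1) (hz0 : z + z⁻¹ ≠ 0) {p q : ℤ} (hpq : IsCoprime q p)
    (h : (q : ℂ) * (z + z⁻¹) = p * (w + w⁻¹)) : |p| ≤ 1 := by
  let K := IntermediateField.adjoin ℚ ({z, w} : Set ℂ)
  have : FiniteDimensional ℚ K := IntermediateField.finiteDimensional_adjoin (by
    rintro x (rfl | rfl)
    exacts [(isIntegral_of_pow_eq_one hN hz).tower_top, (isIntegral_of_pow_eq_one hN hw).tower_top])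
  have : NumberField K := {}
  let z' : K := ⟨z, IntermediateField.subset_adjoin ℚ _ (by simp)⟩
  let w' : K := ⟨w, IntermediateField.subset_adjoin ℚ _ (by simp)⟩
  have hinj : Function.Injective (algebraMap K ℂ) := (algebraMap K ℂ).injective
  have hz' : algebraMap K ℂ z' = z := rfl
  have hw' : algebraMap K ℂ w' = w := rfl
  refine NumberField.abs_le_one_of_mul_add_inv_eq (z := z') (w := w') hN ?_ ?_ ?_ ?_ hpq ?_
  · apply hinj; simpa [hz'] using hz
  · apply hinj; simpa [hw'] using hw
  · exact fun h' => hz2 (by rw [← hz', ← map_pow, h', map_one])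
  · exact fun h' => hz0 (by rw [← hz', ← map_inv₀, ← map_add, h', map_zero])
  · apply hinj; simpa [hz', hw'] using h

theorem Complex.two_cos_pi_mul_div_eq (k : ℤ) (n : ℕ) :
    2 * (Real.cos (π * (k / n)) : ℂ) =
      Complex.exp (π * I / n) ^ k + (Complex.exp (π * I / n) ^ k)⁻¹ := by
  rw [← Complex.exp_int_mul, ← Complex.exp_neg, Complex.ofReal_cos, Complex.two_cos]
  push_cast
  ring_nf

theorem Real.abs_num_le_one_of_cos_pi_mul_eq_mul (x y r : ℚ) (hx0 : cos (π * x) ≠ 0)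
    (hx1 : |cos (π * x)| ≠ 1) (h : cos (π * x) = r * cos (π * y)) : |r.num| ≤ 1 := by
  set n := x.den * y.den
  set k : ℤ := x.num * y.den
  set l : ℤ := y.num * x.den
  have hx : (x : ℝ) = k / n := by rw [Rat.cast_def]; push_cast [n, k]; field_simp
  have hy : (y : ℝ) = l / n := by rw [Rat.cast_def]; push_cast [n, l]; field_simp
  set ζ := Complex.exp (π * Complex.I / n)
  have hζ : ζ ^ (2 * n) = 1 := by
    rw [← Complex.exp_nat_mul, ← Complex.exp_two_pi_mul_I]
    have hn : (n : ℂ) ≠ 0 := by simp [n]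
    congr 1; push_cast; field_simp
  have hpow (m : ℤ) : (ζ ^ m) ^ (2 * n) = 1 := by
    rw [← zpow_natCast, ← zpow_mul, mul_comm, zpow_mul, zpow_natCast, hζ, one_zpow]
  have hrel : (r.den : ℝ) * cos (π * x) = r.num * cos (π * y) := by
    rw [h, Rat.cast_def r]; field_simp
  rw [hx] at hx0 hx1 hrel
  rw [hy] at hrel
  refine Complex.abs_le_one_of_mul_add_inv_eq (by positivity) (hpow k) (hpow l) ?_ ?_
    (q := r.den) r.isCoprime_num_den.symm ?_
  · intro h2
    apply hx1
    have h2cos := Complex.two_cos_pi_mul_div_eq k n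
    rcases sq_eq_one_iff.1 h2 with h1 | h1 <;> rw [h1] at h2cos
    · have : (cos (π * (k / n)) : ℂ) = 1 := by linear_combination h2cos / 2
      rw [Complex.ofReal_eq_one.1 this, abs_one]
    · have : (cos (π * (k / n)) : ℂ) = -1 := by linear_combination h2cos / 2
      rw [(by exact_mod_cast this : cos (π * (k / n)) = -1), abs_neg, abs_one]
  · rw [← Complex.two_cos_pi_mul_div_eq]
    exact_mod_cast mul_ne_zero two_ne_zero hx0
  · rw [← Complex.two_cos_pi_mul_div_eq, ← Complex.two_cos_pi_mul_div_eq]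
    have := congrArg ((↑) : ℝ → ℂ) hrel
    push_cast at this ⊢
    linear_combination 2 * this

theorem stmt11_general (A B : ℚ) (hA : A ≠ 0) (a' b' : ℚ)
    (ha : 0 < π * (a' : ℝ)) (hab : π * (a' : ℝ) < π * (b' : ℝ)) (hb : π * (b' : ℝ) < π / 2) :
    (A : ℝ) * Real.cos (π * (a' : ℝ)) + (B : ℝ) * Real.cos (π * (b' : ℝ)) ≠ 0 := by
  intro h
  have hcos_b : 0 < cos (π * b') := cos_pos_of_mem_Ioo ⟨by linarith [pi_pos], hb⟩
  have hcos_lt : cos (π * b') < cos (π * a') :=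
    cos_lt_cos_of_nonneg_of_le_pi ha.le (by linarith [pi_pos]) hab
  have hcos_a : cos (π * a') < 1 := by
    simpa using cos_lt_cos_of_nonneg_of_le_pi le_rfl (by linarith [pi_pos]) ha
  set r : ℚ := -B / A
  have hr : cos (π * a') = r * cos (π * b') := by
    have hA' : (A : ℝ) ≠ 0 := by exact_mod_cast hA
    push_cast [r]; field_simp; linarith
  have hr1 : 1 < r := by
    have : (1 : ℝ) < r := by nlinarith
    exact_mod_cast this
  have hnum : 1 < r.num := by
    have : (1 : ℚ) < r.num := by
      rw [← Rat.mul_den_eq_num]; nlinarith [(by exact_mod_cast r.den_pos : (1 : ℚ) ≤ r.den)]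
    exact_mod_cast this
  have := Real.abs_num_le_one_of_cos_pi_mul_eq_mul a' b' r (by linarith)
    (by rw [abs_of_pos (by linarith)]; exact hcos_a.ne) hr
  linarith [le_abs_self r.num]

theorem stmt11 (A B : ℚ) (hA : A ≠ 0) (hB : B ≠ 0) (a' b' : ℚ)
    (ha : 0 < π * (a' : ℝ)) (hab : π * (a' : ℝ) < π * (b' : ℝ)) (hb : π * (b' : ℝ) < π / 2) :
    (A : ℝ) * Real.cos (π * (a' : ℝ)) + (B : ℝ) * Real.cos (π * (b' : ℝ)) ≠ 0 :=
  stmt11_general A B hA a' b' ha hab hb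
end

section
/- Let n ≥ 3 be an integer and let γ₀,…,γ_{n−1} ∈ [0,1) be offsets. Define the n-fold directions ζ_n = exp(2πi/n) if n is odd and ζ_n = exp(πi/n) if n is even, and the grid lines H_i = { z ∈ ℂ : Re(z·conj(ζ_n^i)) − γ_i ∈ ℤ }. Suppose that for all integers p, q with 0 < q < p < n and all r₀ ∈ ℤ − γ₀, r_q ∈ ℤ − γ_q, r_p ∈ ℤ − γ_p, we have (when n is odd) r₀·sin(2(p−q)π/n) + r_p·sin(2qπ/n) − r_q·sin(2pπ/n) ≠ 0, and (when n is even) r₀·sin((p−q)π/n) + r_p·sin(qπ/n) − r_q·sin(pπ/n) ≠ 0, where this condition is imposed after rotating so that the three grid families are indexed 0, q, p. Then no point of ℂ lies on three lines of the multigrid coming from three distinct grid families: concretely, there is no z ∈ ℂ and no triple of distinct indices i < j < k in {0,…,n−1} with Re(z·conj(ζ_n^i)) − γ_i ∈ ℤ, Re(z·conj(ζ_n^j)) − γ_j ∈ ℤ, and Re(z·conj(ζ_n^k)) − γ_k ∈ ℤ. -/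
/-!
The projections `Re (z · conj e^{iφ})` of a point `z` onto three directions `a, b, c` are linearly
dependent, with coefficients `sin (c - b), -sin (c - a), sin (b - a)` (expand each sine by the
subtraction formula). If `z` lay on lines of the families `i < j < k`, with directions `i θ, j θ, k θ`,
the negated projections would be admissible values `r ∈ ℤ - γ` in the trigonometric condition, and
this relation would make the excluded combination vanish.
-/

open Real Complex

lemma re_mul_conj_exp_ofReal_mul_I (z : ℂ) (φ : ℝ) :
    (z * (starRingEnd ℂ) (cexp (φ * I))).re = z.re * Real.cos φ + z.im * Real.sin φ := by
  rw [← exp_conj, map_mul, conj_ofReal, conj_I, mul_neg, ← neg_mul, ← ofReal_neg, mul_re,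
    exp_ofReal_mul_I_re, exp_ofReal_mul_I_im, Real.cos_neg, Real.sin_neg]
  ring

theorem re_mul_conj_exp_linear_relation (z : ℂ) (a b c : ℝ) :
    (z * (starRingEnd ℂ) (cexp (a * I))).re * Real.sin (c - b)
      + (z * (starRingEnd ℂ) (cexp (c * I))).re * Real.sin (b - a)
      - (z * (starRingEnd ℂ) (cexp (b * I))).re * Real.sin (c - a) = 0 := by
  simp only [re_mul_conj_exp_ofReal_mul_I, Real.sin_sub]
  ring

theorem stmt16_general (n : ℕ) (γ : Fin n → ℝ)
    (ζ : ℂ)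
    (hζ : ζ = if Odd n then Complex.exp (2 * Real.pi * Complex.I / n)
              else Complex.exp (Real.pi * Complex.I / n))
    (htrig : ∀ i j k : Fin n, i < j → j < k →
      ∀ r₀ rq rp : ℝ,
        (∃ m : ℤ, r₀ = (m : ℝ) - γ i) →
        (∃ m : ℤ, rq = (m : ℝ) - γ j) →
        (∃ m : ℤ, rp = (m : ℝ) - γ k) →
        (Odd n →
          r₀ * Real.sin (2 * ((k : ℝ) - (j : ℝ)) * Real.pi / n)
            + rp * Real.sin (2 * ((j : ℝ) - (i : ℝ)) * Real.pi / n)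
            - rq * Real.sin (2 * ((k : ℝ) - (i : ℝ)) * Real.pi / n) ≠ 0) ∧
        (Even n →
          r₀ * Real.sin (((k : ℝ) - (j : ℝ)) * Real.pi / n)
            + rp * Real.sin (((j : ℝ) - (i : ℝ)) * Real.pi / n)
            - rq * Real.sin (((k : ℝ) - (i : ℝ)) * Real.pi / n) ≠ 0)) :
    ¬ ∃ (z : ℂ) (i j k : Fin n), i < j ∧ j < k ∧
      (∃ m : ℤ, (z * (starRingEnd ℂ) (ζ ^ (i : ℕ))).re - γ i = (m : ℝ)) ∧
      (∃ m : ℤ, (z * (starRingEnd ℂ) (ζ ^ (j : ℕ))).re - γ j = (m : ℝ)) ∧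
      (∃ m : ℤ, (z * (starRingEnd ℂ) (ζ ^ (k : ℕ))).re - γ k = (m : ℝ)) := by
  rintro ⟨z, i, j, k, hij, hjk, ⟨mi, hmi⟩, ⟨mj, hmj⟩, ⟨mk, hmk⟩⟩
  set θ : ℝ := if Odd n then 2 * π / n else π / n with hθ
  have hζθ : ζ = cexp (θ * I) := by
    rw [hζ, hθ]
    split_ifs <;> push_cast <;> ring_nf
  have hpow (m : ℕ) : ζ ^ m = cexp ((m * θ : ℝ) * I) := by
    rw [hζθ, ← Complex.exp_nat_mul]
    push_cast
    ring_nf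
  have hrel := re_mul_conj_exp_linear_relation z (i * θ) (j * θ) (k * θ)
  rw [← hpow, ← hpow, ← hpow] at hrel
  have H := htrig i j k hij hjk (-(z * (starRingEnd ℂ) (ζ ^ (i : ℕ))).re)
    (-(z * (starRingEnd ℂ) (ζ ^ (j : ℕ))).re) (-(z * (starRingEnd ℂ) (ζ ^ (k : ℕ))).re)
    ⟨-mi, by push_cast; linarith⟩ ⟨-mj, by push_cast; linarith⟩ ⟨-mk, by push_cast; linarith⟩
  rcases Nat.even_or_odd n with hn | hn
  · refine H.2 hn ?_
    rw [hθ, if_neg (Nat.not_odd_iff_even.mpr hn)] at hrel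
    ring_nf at hrel ⊢
    linarith
  · refine H.1 hn ?_
    rw [hθ, if_pos hn] at hrel
    ring_nf at hrel ⊢
    linarith

theorem stmt16 (n : ℕ) (hn : 3 ≤ n) (γ : Fin n → ℝ)
    (hγ : ∀ i, γ i ∈ Set.Ico (0 : ℝ) 1)
    (ζ : ℂ)
    (hζ : ζ = if Odd n then Complex.exp (2 * Real.pi * Complex.I / n)
              else Complex.exp (Real.pi * Complex.I / n))
    (htrig : ∀ i j k : Fin n, i < j → j < k →
      ∀ r₀ rq rp : ℝ,
        (∃ m : ℤ, r₀ = (m : ℝ) - γ i) →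
        (∃ m : ℤ, rq = (m : ℝ) - γ j) →
        (∃ m : ℤ, rp = (m : ℝ) - γ k) →
        (Odd n →
          r₀ * Real.sin (2 * ((k : ℝ) - (j : ℝ)) * Real.pi / n)
            + rp * Real.sin (2 * ((j : ℝ) - (i : ℝ)) * Real.pi / n)
            - rq * Real.sin (2 * ((k : ℝ) - (i : ℝ)) * Real.pi / n) ≠ 0) ∧
        (Even n →
          r₀ * Real.sin (((k : ℝ) - (j : ℝ)) * Real.pi / n)
            + rp * Real.sin (((j : ℝ) - (i : ℝ)) * Real.pi / n)
            - rq * Real.sin (((k : ℝ) - (i : ℝ)) * Real.pi / n) ≠ 0)) :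
    ¬ ∃ (z : ℂ) (i j k : Fin n), i < j ∧ j < k ∧
      (∃ m : ℤ, (z * (starRingEnd ℂ) (ζ ^ (i : ℕ))).re - γ i = (m : ℝ)) ∧
      (∃ m : ℤ, (z * (starRingEnd ℂ) (ζ ^ (j : ℕ))).re - γ j = (m : ℝ)) ∧
      (∃ m : ℤ, (z * (starRingEnd ℂ) (ζ ^ (k : ℕ))).re - γ k = (m : ℝ)) :=
  stmt16_general n γ ζ hζ htrig
end
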